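/- Time-coherence is invariant under reduction: if a system R is time-coherent and R reduces to R' (by a communication action or a time action), then R' is time-coherent. -/
import Mathlib


/-- Time values: `none` is the wildcard `*`, `some t` a natural time. -/
abbrev TVal := Option ℕ

/-- The synchronization partial function `⊔`, returning `none` when undefined. -/
def sync : TVal → TVal → Option TVal
  | none, x => some x
  | some t, none => some (some t)
  | some t₁, some t₂ => if t₁ = t₂ then some (some t₁) else none

/-- Node identifiers. -/
abbrev NId := ℕ

/-- Values: atoms, node identifiers, variables. -/
inductive Val : Type
  | atom (a : ℕ)
  | nid (n : NId)
  | var (x : ℕ)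
deriving DecidableEq

/-- Messages are tuples (lists) of values. -/
abbrev Msg := List Val

/-- Pattern elements: variables or atoms. -/
inductive Pat : Type
  | var (x : ℕ)
  | atom (a : ℕ)
deriving DecidableEq

/-- Substitutions, as finite association lists. -/
abbrev Subst := List (ℕ × Val)

/-- Matching of a single pattern element against a value. -/
inductive MatchE : Pat → Val → Subst → Prop
  | varA (x a : ℕ) : MatchE (.var x) (.atom a) [(x, .atom a)]
  | varN (x : ℕ) (n : NId) : MatchE (.var x) (.nid n) [(x, .nid n)]
  | atom (a : ℕ) : MatchE (.atom a) (.atom a) []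

/-- Matching of a pattern tuple against a message tuple. -/
inductive MatchT : List Pat → List Val → Subst → Prop
  | nil : MatchT [] [] []
  | cons {p v σ₁ ps vs σ₂} :
      MatchE p v σ₁ → MatchT ps vs σ₂ → MatchT (p :: ps) (v :: vs) (σ₁ ++ σ₂)

/-- Matching of a pattern against a mailbox (list of messages): rules MboxH and MboxT. -/
inductive MatchMbox : List Pat → List Msg → Subst → Prop
  | head {p m M σ} : MatchT p m σ → MatchMbox p (m :: M) σ
  | tail {p m M σ} : (∀ σ', ¬ MatchT p m σ') → MatchMbox p M σ → MatchMbox p (m :: M) σ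

/- Processes (recursion in de Bruijn style). -/
mutual
inductive Proc : Type
  | send (br : Branches)                      -- choice of sends ⊕ !nᵢ mᵢ.Pᵢ
  | recv (br : RBranches) (timeout : Proc)    -- ?{pᵢ.Pᵢ} after P
  | sleep (P : Proc)
  | save (P : Proc)
  | fix (P : Proc)                            -- μt.P
  | rvar (k : ℕ)                              -- recursion variable t
  | nil
inductive Branches : Type
  | nil
  | cons (n : NId) (m : Msg) (P : Proc) (rest : Branches)
inductive RBranches : Type
  | nil
  | cons (p : List Pat) (P : Proc) (rest : RBranches)
end

/-- Membership in send branches. -/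
inductive BrMem : NId → Msg → Proc → Branches → Prop
  | head {n m P rest} : BrMem n m P (.cons n m P rest)
  | tail {n m P n' m' P' rest} : BrMem n m P rest → BrMem n m P (.cons n' m' P' rest)

/-- Membership in receive branches. -/
inductive RBrMem : List Pat → Proc → RBranches → Prop
  | head {p P rest} : RBrMem p P (.cons p P rest)
  | tail {p P p' P' rest} : RBrMem p P rest → RBrMem p P (.cons p' P' rest)

/- Substitution of a process `Q` for the recursion variable with index `k`. -/
mutual
def substRec (k : ℕ) (Q : Proc) : Proc → Proc
  | .send br => .send (substRecB k Q br)
  | .recv br T => .recv (substRecR k Q br) (substRec k Q T)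
  | .sleep P => .sleep (substRec k Q P)
  | .save P => .save (substRec k Q P)
  | .fix P => .fix (substRec (k + 1) Q P)
  | .rvar j => if j = k then Q else .rvar j
  | .nil => .nil
def substRecB (k : ℕ) (Q : Proc) : Branches → Branches
  | .nil => .nil
  | .cons n m P rest => .cons n m (substRec k Q P) (substRecB k Q rest)
def substRecR (k : ℕ) (Q : Proc) : RBranches → RBranches
  | .nil => .nil
  | .cons p P rest => .cons p (substRec k Q P) (substRecR k Q rest)
end

/-- Unfolding of μt.P : P[μt.P / t]. -/
def unfold (P : Proc) : Proc := substRec 0 (.fix P) P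

def lookupS (σ : Subst) (x : ℕ) : Option Val := (σ.find? (fun e => e.1 == x)).map (·.2)

def applyV (σ : Subst) : Val → Val
  | .var x => (lookupS σ x).getD (.var x)
  | v => v

def applyM (σ : Subst) (m : Msg) : Msg := m.map (applyV σ)

/- Application of a substitution to a process. -/
mutual
def applyP (σ : Subst) : Proc → Proc
  | .send br => .send (applyPB σ br)
  | .recv br T => .recv (applyPR σ br) (applyP σ T)
  | .sleep P => .sleep (applyP σ P)
  | .save P => .save (applyP σ P)
  | .fix P => .fix (applyP σ P)
  | .rvar k => .rvar k
  | .nil => .nil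
def applyPB (σ : Subst) : Branches → Branches
  | .nil => .nil
  | .cons n m P rest => .cons n (applyM σ m) (applyP σ P) (applyPB σ rest)
def applyPR (σ : Subst) : RBranches → RBranches
  | .nil => .nil
  | .cons p P rest => .cons p (applyP σ P) (applyPR σ rest)
end

/- The non-instantaneousness predicate `ninst`. -/
mutual
def ninst : Proc → Bool
  | .send br => ninstB br
  | .recv br _ => ninstR br
  | .sleep _ => true
  | .save P => ninst P
  | .fix P => ninst P
  | .rvar _ => false
  | .nil => false
def ninstB : Branches → Bool
  | .nil => true
  | .cons _ _ P rest => ninst P && ninstB rest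
def ninstR : RBranches → Bool
  | .nil => true
  | .cons _ P rest => ninst P && ninstR rest
end

/-- Systems. -/
inductive System : Type
  | node (n : NId) (P : Proc) (M : List Msg) (t : ℕ) (Q : Proc)  -- n[P](M)(t){Q}
  | crashed (n : NId) (t : ℕ) (Q : Proc)                         -- n[↓](∅)(t){Q}
  | fmsg (n₁ n₂ : NId) (m : Msg) (t : ℕ)                         -- floating message
  | lmsg (u : ℕ) (n₁ n₂ : NId) (m : Msg) (t : ℕ)                 -- latent message
  | empty
  | par (R₁ R₂ : System)

/-- Health state of a node or link. -/
inductive Health : Type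
  | up
  | down
  | slow

/-- A curse Δ assigns a health state to each node and link at each time. -/
structure Curse : Type where
  nodeH : ℕ → NId → Health
  linkH : ℕ → NId → NId → Health

/-- The time of a system (a partial function; `some none` is the wildcard `*`). -/
def timeSys : System → Option TVal
  | .node _ _ _ t _ => some (some t)
  | .crashed _ t _ => some (some t)
  | .fmsg _ _ _ t => some (some t)
  | .lmsg _ _ _ _ t => some (some t)
  | .empty => some none
  | .par a b => (timeSys a).bind fun x => (timeSys b).bind fun y => sync x y

/-- Time coherence: the time of the system is defined. -/
def TimeCoherent (R : System) : Prop := (timeSys R).isSome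

/-- Structural equivalence of systems. -/
inductive SEq : System → System → Prop
  | refl (R) : SEq R R
  | symm {R₁ R₂} : SEq R₁ R₂ → SEq R₂ R₁
  | trans {R₁ R₂ R₃} : SEq R₁ R₂ → SEq R₂ R₃ → SEq R₁ R₃
  | parComm (a b) : SEq (.par a b) (.par b a)
  | parAssoc (a b c) : SEq (.par (.par a b) c) (.par a (.par b c))
  | parEmpty (a) : SEq (.par a .empty) a
  | lmsgZero (n₁ n₂ m t) : SEq (.lmsg 0 n₁ n₂ m t) (.fmsg n₁ n₂ m t)
  | parCong {a a' b b'} : SEq a a' → SEq b b' → SEq (.par a b) (.par a' b')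

/-- Network latency constant L. -/
def netLatency : ℕ := 1

/-- Communication actions ↪ (instantaneous actions, including failure actions). -/
inductive Comm (Δ : Curse) : System → System → Prop
  | snd {n br M t Q nj mj Pj} :
      Δ.nodeH t n = .up → BrMem nj mj Pj br →
      Comm Δ (.node n (.send br) M t Q)
             (.par (.node n Pj M t Q) (.lmsg netLatency n nj mj t))
  | sched {n₁ n₂ m t P M Q} :
      Δ.nodeH t n₁ = .up → Δ.linkH t n₂ n₁ = .up →
      Comm Δ (.par (.fmsg n₂ n₁ m t) (.node n₁ P M t Q)) (.node n₁ P (M ++ [m]) t Q)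
  | rcv {n br T M₁ m M₂ t Q p Pj σ} :
      Δ.nodeH t n = .up →
      RBrMem p Pj br → MatchT p m σ →
      (∀ p' P', RBrMem p' P' br → ∀ m' ∈ M₁, ∀ σ', ¬ MatchT p' m' σ') →
      Comm Δ (.node n (.recv br T) (M₁ ++ m :: M₂) t Q)
             (.node n (applyP σ Pj) (M₁ ++ M₂) t Q)
  | checkpoint {n P M t Q} :
      Comm Δ (.node n (.save P) M t Q) (.node n P M t P)
  | msgLoss {u n₁ n₂ m t} :
      Δ.linkH t n₁ n₂ = .down →
      Comm Δ (.lmsg u n₁ n₂ m t) .empty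
  | down {n P M t Q} :
      Δ.nodeH t n = .down →
      Comm Δ (.node n P M t Q) (.crashed n t Q)
  | up {n t Q} :
      Δ.nodeH t n = .up →
      Comm Δ (.crashed n t Q) (.node n Q [] t Q)
  | recur {n P M t Q P' M' t'} :
      Δ.nodeH t n = .up →
      Comm Δ (.node n (unfold P) M t Q) (.node n P' M' t' Q) →
      Comm Δ (.node n (.fix P) M t Q) (.node n P' M' t' Q)
  | parCom {R₁ R₁' R₂} :
      Comm Δ R₁ R₁' → Comm Δ (.par R₁ R₂) (.par R₁' R₂)
  | str {R₁ R₁' R₂ R₂'} :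
      SEq R₁ R₁' → Comm Δ R₁' R₂' → SEq R₂' R₂ → Comm Δ R₁ R₂

/-- Time actions ⇝. -/
inductive TimeStep (Δ : Curse) : System → System → Prop
  | sleep {n P M t Q} :
      Δ.nodeH t n = .up →
      TimeStep Δ (.node n (.sleep P) M t Q) (.node n P M (t + 1) Q)
  | latency {u n₁ n₂ m t} :
      Δ.linkH t n₁ n₂ = .up →
      TimeStep Δ (.lmsg u n₁ n₂ m t) (.lmsg (u - 1) n₁ n₂ m (t + 1))
  | timeout {n br T M t Q} :
      Δ.nodeH t n = .up →
      (∀ p P', RBrMem p P' br → ∀ m ∈ M, ∀ σ, ¬ MatchT p m σ) →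
      TimeStep Δ (.node n (.recv br T) M t Q) (.node n T M (t + 1) Q)
  | idle {n M t Q} :
      Δ.nodeH t n = .up →
      TimeStep Δ (.node n .nil M t Q) (.node n .nil M (t + 1) Q)
  | nLate {n P M t Q} :
      Δ.nodeH t n = .slow →
      TimeStep Δ (.node n P M t Q) (.node n P M (t + 1) Q)
  | msgLate {u n₁ n₂ m t} :
      Δ.linkH t n₁ n₂ = .slow →
      TimeStep Δ (.lmsg u n₁ n₂ m t) (.lmsg u n₁ n₂ m (t + 1))
  | ndLate {n t Q} :
      Δ.nodeH t n = .down →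
      TimeStep Δ (.crashed n t Q) (.crashed n (t + 1) Q)
  | empty : TimeStep Δ .empty .empty
  | recur {n P M t Q P' M' t'} :
      Δ.nodeH t n = .up →
      TimeStep Δ (.node n (unfold P) M t Q) (.node n P' M' t' Q) →
      TimeStep Δ (.node n (.fix P) M t Q) (.node n P' M' t' Q)
  | parTime {R₁ R₁' R₂ R₂'} :
      TimeStep Δ R₁ R₁' → TimeStep Δ R₂ R₂' →
      (∀ R', ¬ Comm Δ (.par R₁ R₂) R') →
      TimeStep Δ (.par R₁ R₂) (.par R₁' R₂')
  | str {R₁ R₁' R₂ R₂'} :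
      SEq R₁ R₁' → TimeStep Δ R₁' R₂' → SEq R₂' R₂ → TimeStep Δ R₁ R₂

/-- Reduction: either a communication action or a time action. -/
def Step (Δ : Curse) (R R' : System) : Prop := Comm Δ R R' ∨ TimeStep Δ R R'

lemma sync_none_right (x : TVal) : sync x none = some x := by cases x <;> rfl

lemma sync_comm (x y : TVal) : sync x y = sync y x := by
  cases x <;> cases y <;> simp [sync]
  split_ifs with h <;> simp_all

lemma sync_assoc (x y z : TVal) :
    (sync x y).bind (fun w => sync w z) = (sync y z).bind (fun w => sync x w) := by
  cases x <;> cases y <;> cases z <;>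
    simp [sync, sync_none_right] <;> split_ifs <;> simp_all [sync, sync_none_right] <;>
    split_ifs <;> simp_all

lemma timeSys_SEq {R₁ R₂ : System} (h : SEq R₁ R₂) : timeSys R₁ = timeSys R₂ := by
  induction h with
  | refl _ => rfl
  | symm _ ih => exact ih.symm
  | trans _ _ ih₁ ih₂ => exact ih₁.trans ih₂
  | parComm a b =>
      simp only [timeSys]
      cases timeSys a <;> cases timeSys b <;> simp [sync_comm]
  | parAssoc a b c =>
      simp only [timeSys]
      cases timeSys a <;> cases timeSys b <;> cases timeSys c <;>
        simp [sync_assoc, sync_none_right]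
  | parEmpty a =>
      simp only [timeSys]
      cases timeSys a with
      | none => rfl
      | some v => simp [sync_none_right]
  | lmsgZero n₁ n₂ m t => rfl
  | parCong _ _ ih₁ ih₂ => simp only [timeSys, ih₁, ih₂]

lemma sync_mono {a a' b x : TVal} (ha : a' = none ∨ a' = a) (h : sync a b = some x) :
    ∃ x', sync a' b = some x' ∧ (x' = none ∨ x' = x) := by
  rcases ha with rfl | rfl
  · refine ⟨b, by cases b <;> rfl, ?_⟩
    cases a with
    | none => simp [sync] at h; exact Or.inr h
    | some t =>
      cases b with
      | none => exact Or.inl rfl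
      | some s =>
        simp [sync] at h
        obtain ⟨rfl, rfl⟩ := h
        exact Or.inr rfl
  · exact ⟨x, h, Or.inr rfl⟩

lemma sync_map {a b x : TVal} (h : sync a b = some x) :
    sync (a.map (· + 1)) (b.map (· + 1)) = some (x.map (· + 1)) := by
  cases a with
  | none => simp [sync] at h ⊢; simp [← h]
  | some t =>
    cases b with
    | none => simp [sync_none_right] at h ⊢; simp [← h]
    | some s =>
      simp [sync] at h ⊢
      obtain ⟨rfl, rfl⟩ := h
      simp

lemma comm_time {Δ : Curse} {R R' : System} (h : Comm Δ R R') :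
    ∀ x, timeSys R = some x → ∃ x', timeSys R' = some x' ∧ (x' = none ∨ x' = x) := by
  induction h with
  | snd _ _ =>
      intro x hx
      simp only [timeSys] at hx ⊢
      exact ⟨x, by simp [sync] at hx ⊢; simp [← hx, sync], Or.inr rfl⟩
  | sched _ _ =>
      intro x hx
      simp only [timeSys, sync] at hx ⊢
      simp at hx
      exact ⟨x, by simp [← hx], Or.inr rfl⟩
  | rcv _ _ _ _ => intro x hx; exact ⟨x, hx, Or.inr rfl⟩
  | checkpoint => intro x hx; exact ⟨x, hx, Or.inr rfl⟩
  | msgLoss _ => intro x hx; exact ⟨none, rfl, Or.inl rfl⟩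
  | down _ => intro x hx; exact ⟨x, hx, Or.inr rfl⟩
  | up _ => intro x hx; exact ⟨x, hx, Or.inr rfl⟩
  | recur _ _ ih => intro x hx; exact ih x hx
  | parCom _ ih =>
      rename_i R₁ R₁' R₂ _
      intro x hx
      simp only [timeSys] at hx
      rcases ha : timeSys R₁ with _ | a <;> rw [ha] at hx <;> simp at hx
      rcases hb : timeSys R₂ with _ | b <;> rw [hb] at hx <;> simp at hx
      obtain ⟨a', ha', hle⟩ := ih a ha
      obtain ⟨x', hx', hle'⟩ := sync_mono hle hx
      exact ⟨x', by simp only [timeSys, ha', hb, Option.bind]; exact hx', hle'⟩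
  | str h₁ _ h₂ ih =>
      intro x hx
      rw [timeSys_SEq h₁] at hx
      obtain ⟨x', hx', hle⟩ := ih x hx
      exact ⟨x', by rw [← timeSys_SEq h₂]; exact hx', hle⟩

lemma time_time {Δ : Curse} {R R' : System} (h : TimeStep Δ R R') :
    ∀ x, timeSys R = some x → timeSys R' = some (x.map (· + 1)) := by
  induction h with
  | sleep _ => intro x hx; simp [timeSys] at hx ⊢; simp [← hx]
  | latency _ => intro x hx; simp [timeSys] at hx ⊢; simp [← hx]
  | timeout _ _ => intro x hx; simp [timeSys] at hx ⊢; simp [← hx]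
  | idle _ => intro x hx; simp [timeSys] at hx ⊢; simp [← hx]
  | nLate _ => intro x hx; simp [timeSys] at hx ⊢; simp [← hx]
  | msgLate _ => intro x hx; simp [timeSys] at hx ⊢; simp [← hx]
  | ndLate _ => intro x hx; simp [timeSys] at hx ⊢; simp [← hx]
  | empty => intro x hx; simp [timeSys] at hx ⊢; simp [← hx]
  | recur _ _ ih => intro x hx; exact ih x hx
  | parTime _ _ _ ih₁ ih₂ =>
      rename_i R₁ R₁' R₂ R₂' _ _ _
      intro x hx
      simp only [timeSys] at hx ⊢
      rcases ha : timeSys R₁ with _ | a <;> rw [ha] at hx <;> simp at hx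
      rcases hb : timeSys R₂ with _ | b <;> rw [hb] at hx <;> simp at hx
      rw [ih₁ a ha, ih₂ b hb]
      simpa using sync_map hx
  | str h₁ _ h₂ ih =>
      intro x hx
      rw [timeSys_SEq h₁] at hx
      rw [← timeSys_SEq h₂]
      exact ih x hx

/-- time-coherence is invariant under reduction. -/
theorem timeCoherent_invariant {Δ : Curse} {R R' : System}
    (hc : TimeCoherent R) (h : Step Δ R R') : TimeCoherent R' := by
  obtain ⟨x, hx⟩ := Option.isSome_iff_exists.mp hc
  rcases h with h | h
  · obtain ⟨x', hx', _⟩ := comm_time h x hx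
    simp [TimeCoherent, hx']
  · simp [TimeCoherent, time_time h x hx]
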